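/- arXiv:2204.02837 — 2 statements merged into one kernel-verified Lean document; each statement's English description precedes it below -/
import Mathlib

section
/- Let K_v be the 2n×2n block matrix [[K^pv, K^pv],[K^qv, K^qv]] where K^pv and K^qv are diagonal n×n matrices, let T = diag(T_p, T_q) with T_p, T_q diagonal positive, and γ > 0. Then the symmetric part of T⁻¹K_v − γI is negative definite if and only if for every index i the 2×2 matrix [[k_i^pv/τ_{p_i} − γ, (k_i^pv/τ_{p_i} + k_i^qv/τ_{q_i})/2], [(k_i^pv/τ_{p_i} + k_i^qv/τ_{q_i})/2, k_i^qv/τ_{q_i} − γ]] is negative definite. -/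
/-!
Pairing each coordinate `p_i` with `q_i`, every block of the symmetric part is diagonal, so its
quadratic form is the sum over `i` of the `2 × 2` forms evaluated at `(x_{p_i}, x_{q_i})`. A sum of
forms in disjoint sets of variables is negative definite iff each summand is: test the sum on a
vector supported on one pair; conversely, a nonzero vector is nonzero on some pair, whose term is
negative while all the others are `≤ 0`.
-/

open Matrix

def IsNegDefinite {V R : Type*} [Zero V] [Zero R] [LT R] (q : V → R) : Prop :=
  ∀ v, v ≠ 0 → q v < 0

section IsNegDefinite

theorem isNegDefinite_comp_equiv {V W R : Type*} [Zero V] [Zero W] [Zero R] [LT R] (e : V ≃ W)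
    (he : e 0 = 0) (q : W → R) : IsNegDefinite (q ∘ e) ↔ IsNegDefinite q := by
  refine e.forall_congr fun {v} => ?_
  rw [← he, e.injective.ne_iff, Function.comp_apply]

variable {R : Type*} [AddCommMonoid R] [PartialOrder R] [IsOrderedCancelAddMonoid R]

theorem isNegDefinite_sum_pi_iff {ι : Type*} [Fintype ι] [DecidableEq ι] {V : ι → Type*}
    [∀ i, Zero (V i)] (q : ∀ i, V i → R) (hq : ∀ i, q i 0 = 0) :
    IsNegDefinite (fun y : ∀ i, V i => ∑ i, q i (y i)) ↔ ∀ i, IsNegDefinite (q i) := by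
  refine ⟨fun h i z hz => ?_, fun h y hy => ?_⟩
  · have : ∑ j, q j (Pi.single i z j) < 0 := h _ (Pi.single_ne_zero_iff.mpr hz)
    rwa [Finset.sum_eq_single i (fun j _ hj => by rw [Pi.single_eq_of_ne hj, hq])
      (fun hi => absurd (Finset.mem_univ i) hi), Pi.single_eq_same] at this
  · have hle : ∀ i, q i (y i) ≤ 0 := fun i => by
      rcases eq_or_ne (y i) 0 with h0 | h0
      · rw [h0, hq]
      · exact (h i _ h0).le
    obtain ⟨i, hi⟩ := Function.ne_iff.mp hy
    exact (Finset.sum_lt_sum (fun i _ => hle i) ⟨i, Finset.mem_univ i, h i _ hi⟩).trans_eq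
      Finset.sum_const_zero

end IsNegDefinite

section Blocks

variable {ι α : Type*}

def sumSelfArrowEquiv : (ι ⊕ ι → α) ≃ (ι → Fin 2 → α) where
  toFun x i := ![x (.inl i), x (.inr i)]
  invFun y := Sum.elim (fun i => y i 0) (fun i => y i 1)
  left_inv x := by ext (i | i) <;> rfl
  right_inv y := by ext i j; fin_cases j <;> rfl

theorem sumSelfArrowEquiv_zero [Zero α] : sumSelfArrowEquiv (0 : ι ⊕ ι → α) = 0 := by
  ext i j; fin_cases j <;> rfl

variable [DecidableEq ι]

theorem dotProduct_fromBlocks_diagonal_mulVec [Fintype ι] [CommRing α] (a b c d : ι → α)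
    (x : ι ⊕ ι → α) :
    x ⬝ᵥ fromBlocks (diagonal a) (diagonal b) (diagonal c) (diagonal d) *ᵥ x =
      ∑ i, sumSelfArrowEquiv x i ⬝ᵥ !![a i, b i; c i, d i] *ᵥ sumSelfArrowEquiv x i := by
  rw [← Sum.elim_comp_inl_inr x, fromBlocks_mulVec, sumElim_dotProduct_sumElim]
  simp only [dotProduct, ← Finset.sum_add_distrib]
  refine Finset.sum_congr rfl fun i _ => ?_
  simp [sumSelfArrowEquiv, mulVec, dotProduct, Fin.sum_univ_two, diagonal_apply]

theorem isNegDefinite_fromBlocks_diagonal_iff [Fintype ι] [CommRing α] [PartialOrder α]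
    [IsOrderedRing α] (a b c d : ι → α) :
    IsNegDefinite
        (fun x => x ⬝ᵥ fromBlocks (diagonal a) (diagonal b) (diagonal c) (diagonal d) *ᵥ x) ↔
      ∀ i, IsNegDefinite (fun z : Fin 2 → α => z ⬝ᵥ !![a i, b i; c i, d i] *ᵥ z) := by
  simp_rw [dotProduct_fromBlocks_diagonal_mulVec]
  exact (isNegDefinite_comp_equiv sumSelfArrowEquiv sumSelfArrowEquiv_zero
    fun y => ∑ i, y i ⬝ᵥ !![a i, b i; c i, d i] *ᵥ y i).trans
      (isNegDefinite_sum_pi_iff (fun i z => z ⬝ᵥ !![a i, b i; c i, d i] *ᵥ z) fun _ => by simp)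

variable {K : Type*} [Field K]

theorem inv_fromBlocks_diagonal_zero_zero_diagonal [Fintype ι] (u v : ι → K)
    (hu : ∀ i, u i ≠ 0) (hv : ∀ i, v i ≠ 0) :
    (fromBlocks (diagonal u) 0 0 (diagonal v))⁻¹ =
      fromBlocks (diagonal u⁻¹) 0 0 (diagonal v⁻¹) := by
  rw [fromBlocks_diagonal, fromBlocks_diagonal]
  refine inv_eq_right_inv ?_
  rw [diagonal_mul_diagonal, ← diagonal_one]
  congr 1
  ext (i | i) <;> simp [hu, hv]

theorem fromBlocks_diagonal_inv_mul_sub_smul_one [Fintype ι] (kp kq tp tq : ι → K)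
    (htp : ∀ i, tp i ≠ 0) (htq : ∀ i, tq i ≠ 0) (γ : K) :
    (fromBlocks (diagonal tp) 0 0 (diagonal tq))⁻¹ *
        fromBlocks (diagonal kp) (diagonal kp) (diagonal kq) (diagonal kq) - γ • 1 =
      fromBlocks (diagonal fun i => kp i / tp i - γ) (diagonal fun i => kp i / tp i)
        (diagonal fun i => kq i / tq i) (diagonal fun i => kq i / tq i - γ) := by
  rw [inv_fromBlocks_diagonal_zero_zero_diagonal tp tq htp htq, fromBlocks_multiply]
  ext (i | i) (j | j) <;> by_cases h : i = j <;> simp [h, one_apply, div_eq_inv_mul]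

theorem half_smul_fromBlocks_diagonal_add_transpose [NeZero (2 : K)] (a b c d : ι → K) :
    (1 / 2 : K) • (fromBlocks (diagonal a) (diagonal b) (diagonal c) (diagonal d) +
        (fromBlocks (diagonal a) (diagonal b) (diagonal c) (diagonal d))ᵀ) =
      fromBlocks (diagonal a) (diagonal fun i => (b i + c i) / 2)
        (diagonal fun i => (b i + c i) / 2) (diagonal d) := by
  rw [fromBlocks_transpose, fromBlocks_add, fromBlocks_smul]
  simp only [diagonal_transpose, diagonal_add, ← diagonal_smul]
  congr 2 <;> funext i <;> simp only [Pi.smul_apply, smul_eq_mul] <;> field_simp <;> ring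

end Blocks

theorem block_decoupling_negdef_general {n : ℕ}
    (kpv kqv τp τq : Fin n → ℝ)
    (hτp : ∀ i, 0 < τp i) (hτq : ∀ i, 0 < τq i)
    (γ : ℝ)
    (Kv : Matrix (Fin n ⊕ Fin n) (Fin n ⊕ Fin n) ℝ)
    (hKv : Kv = Matrix.fromBlocks (Matrix.diagonal kpv) (Matrix.diagonal kpv)
        (Matrix.diagonal kqv) (Matrix.diagonal kqv))
    (T : Matrix (Fin n ⊕ Fin n) (Fin n ⊕ Fin n) ℝ)
    (hT : T = Matrix.fromBlocks (Matrix.diagonal τp) 0 0 (Matrix.diagonal τq))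
    (M S : Matrix (Fin n ⊕ Fin n) (Fin n ⊕ Fin n) ℝ)
    (hM : M = T⁻¹ * Kv - γ • (1 : Matrix (Fin n ⊕ Fin n) (Fin n ⊕ Fin n) ℝ))
    (hS : S = (1/2 : ℝ) • (M + Mᵀ)) :
    (∀ x : Fin n ⊕ Fin n → ℝ, x ≠ 0 → x ⬝ᵥ S.mulVec x < 0) ↔
      (∀ i : Fin n, ∀ z : Fin 2 → ℝ, z ≠ 0 →
        z ⬝ᵥ (!![kpv i / τp i - γ, (kpv i / τp i + kqv i / τq i)/2;
                 (kpv i / τp i + kqv i / τq i)/2, kqv i / τq i - γ]).mulVec z < 0) := by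
  subst hS hM hT hKv
  rw [fromBlocks_diagonal_inv_mul_sub_smul_one kpv kqv τp τq (fun i => (hτp i).ne')
    (fun i => (hτq i).ne'), half_smul_fromBlocks_diagonal_add_transpose]
  exact isNegDefinite_fromBlocks_diagonal_iff _ _ _ _

theorem block_decoupling_negdef {n : ℕ}
    (kpv kqv τp τq : Fin n → ℝ)
    (hτp : ∀ i, 0 < τp i) (hτq : ∀ i, 0 < τq i)
    (γ : ℝ) (hγ : 0 < γ)
    (Kv : Matrix (Fin n ⊕ Fin n) (Fin n ⊕ Fin n) ℝ)
    (hKv : Kv = Matrix.fromBlocks (Matrix.diagonal kpv) (Matrix.diagonal kpv)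
        (Matrix.diagonal kqv) (Matrix.diagonal kqv))
    (T : Matrix (Fin n ⊕ Fin n) (Fin n ⊕ Fin n) ℝ)
    (hT : T = Matrix.fromBlocks (Matrix.diagonal τp) 0 0 (Matrix.diagonal τq))
    (M S : Matrix (Fin n ⊕ Fin n) (Fin n ⊕ Fin n) ℝ)
    (hM : M = T⁻¹ * Kv - γ • (1 : Matrix (Fin n ⊕ Fin n) (Fin n ⊕ Fin n) ℝ))
    (hS : S = (1/2 : ℝ) • (M + Mᵀ)) :
    (∀ x : Fin n ⊕ Fin n → ℝ, x ≠ 0 → x ⬝ᵥ S.mulVec x < 0) ↔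
      (∀ i : Fin n, ∀ z : Fin 2 → ℝ, z ≠ 0 →
        z ⬝ᵥ (!![kpv i / τp i - γ, (kpv i / τp i + kqv i / τq i)/2;
                 (kpv i / τp i + kqv i / τq i)/2, kqv i / τq i - γ]).mulVec z < 0) :=
  block_decoupling_negdef_general kpv kqv τp τq hτp hτq γ Kv hKv T hT M S hM hS
end

section
/- If a linear time-invariant system ẋ = Ax admits a quadratic Lyapunov function V(x) = (1/2)xᵀGx with G symmetric positive definite such that xᵀ(GA)x < 0 for all x ≠ 0, then every eigenvalue of A has strictly negative real part. -/
/-!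
If `A v = μ v` with `v ≠ 0`, then `v* (G A) v = μ (v* G v)`. For a real matrix `M`, the real part
of `v* M v` is the sum of the real quadratic forms of `M` at `Re v` and `Im v`, so it inherits the
sign of a definite form. Hence `v* G v` is a positive real number (it is real as `G` is symmetric)
while `v* (G A) v` has negative real part, which forces `Re μ < 0`.
-/

open Matrix

namespace Matrix

variable {n : Type*} [Fintype n]

theorem re_star_dotProduct_map_ofReal_mulVec (M : Matrix n n ℝ) (v : n → ℂ) :
    (star v ⬝ᵥ M.map Complex.ofReal *ᵥ v).re =
      (fun i => (v i).re) ⬝ᵥ M *ᵥ (fun i => (v i).re) +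
        (fun i => (v i).im) ⬝ᵥ M *ᵥ (fun i => (v i).im) := by
  simp only [dotProduct, mulVec, map_apply, Pi.star_apply, Complex.star_def, Complex.re_sum,
    Complex.mul_re, Complex.im_sum, Complex.conj_re, Complex.conj_im, Complex.ofReal_re,
    Complex.ofReal_im, Complex.mul_im, zero_mul, sub_zero, add_zero, ← Finset.sum_add_distrib]
  exact Finset.sum_congr rfl fun i _ => by ring

theorem re_star_dotProduct_map_ofReal_mulVec_pos {M : Matrix n n ℝ}
    (hM : ∀ x ≠ 0, 0 < x ⬝ᵥ M *ᵥ x) {v : n → ℂ} (hv : v ≠ 0) :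
    0 < (star v ⬝ᵥ M.map Complex.ofReal *ᵥ v).re := by
  have hM' : ∀ x, 0 ≤ x ⬝ᵥ M *ᵥ x := fun x => by
    rcases eq_or_ne x 0 with rfl | hx
    · simp
    · exact (hM x hx).le
  rw [re_star_dotProduct_map_ofReal_mulVec]
  by_cases hre : (fun i => (v i).re) = 0
  · have him : (fun i => (v i).im) ≠ 0 := fun him =>
      hv (funext fun i => Complex.ext (congrFun hre i) (congrFun him i))
    linarith [hM' fun i => (v i).re, hM _ him]
  · linarith [hM _ hre, hM' fun i => (v i).im]

end Matrix

theorem lyapunov_implies_hurwitz {m : ℕ}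
    (A G : Matrix (Fin m) (Fin m) ℝ) (hG : G.PosDef)
    (hV : ∀ x : Fin m → ℝ, x ≠ 0 → x ⬝ᵥ ((G * A).mulVec x) < 0) :
    ∀ (μ : ℂ) (v : Fin m → ℂ), v ≠ 0 →
      (A.map (Complex.ofReal)).mulVec v = μ • v → μ.re < 0 := by
  intro μ v hv hAv
  set q := star v ⬝ᵥ G.map Complex.ofReal *ᵥ v
  have hq_im : q.im = 0 :=
    (hG.isHermitian.map _ fun _ => (Complex.conj_ofReal _).symm).im_star_dotProduct_mulVec_self v
  have hq_re : 0 < q.re := re_star_dotProduct_map_ofReal_mulVec_pos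
    (fun x hx => by simpa using hG.dotProduct_mulVec_pos hx) hv
  have hmap : (G * A).map Complex.ofReal = G.map Complex.ofReal * A.map Complex.ofReal :=
    Matrix.map_mul (f := Complex.ofRealHom)
  have hGA : star v ⬝ᵥ (G * A).map Complex.ofReal *ᵥ v = μ * q := by
    rw [hmap, ← mulVec_mulVec, hAv, mulVec_smul, dotProduct_smul, smul_eq_mul]
  have hGA_re : (μ * q).re < 0 := by
    have := re_star_dotProduct_map_ofReal_mulVec_pos (M := -(G * A))
      (fun x hx => by simpa [neg_mulVec] using hV x hx) hv
    rwa [Matrix.map_neg _ Complex.ofReal_neg, neg_mulVec, dotProduct_neg, Complex.neg_re,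
      neg_pos, hGA] at this
  rw [Complex.mul_re, hq_im, mul_zero, sub_zero] at hGA_re
  exact neg_of_mul_neg_left hGA_re hq_re.le
end
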